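/- arXiv:1906.03101 — 4 statements merged into one kernel-verified Lean document; each statement's English description precedes it below -/
import Mathlib

section
/- If every path in P is edge simple and P is arc closed, then every path in P↓↑ is edge simple. -/
/-- The set of switch rules induced by a set of paths:
`(a,b,c) ∈ Rules P` iff some path of `P` contains the consecutive triple `a,b,c`. -/
def Rules {V : Type*} (P : Set (List V)) : Set (V × V × V) :=
  {r | ∃ α β : List V, α ++ [r.1, r.2.1, r.2.2] ++ β ∈ P}

/-- `P↓↑`: the set of paths (with at least 3 nodes) all of whose consecutive
triples are rules of `P`, and whose first and last arcs occur as the first/last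
arcs of some paths of `P`. -/
def Closure {V : Type*} (P : Set (List V)) : Set (List V) :=
  {l | 3 ≤ l.length ∧
    (∀ (α β : List V) (a b c : V), l = α ++ [a, b, c] ++ β → (a, b, c) ∈ Rules P) ∧
    (∃ x y : V, (∃ r : List V, l = x :: y :: r) ∧ ∃ p ∈ P, ∃ r : List V, p = x :: y :: r) ∧
    (∃ x y : V, (∃ r : List V, l = r ++ [x, y]) ∧ ∃ p ∈ P, ∃ r : List V, p = r ++ [x, y])}

/-- A set of paths is arc closed if it satisfies the exchange property for common arcs. -/
def ArcClosed {V : Type*} (P : Set (List V)) : Prop :=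
  ∀ (α α' β β' : List V) (x y : V),
    α ++ [x, y] ++ β ∈ P → α' ++ [x, y] ++ β' ∈ P → α ++ [x, y] ++ β' ∈ P

/-- A path is edge simple if its consecutive arcs are pairwise distinct. -/
def EdgeSimple {V : Type*} (l : List V) : Prop := (l.zip l.tail).Nodup

/-!
Arc closedness lets two paths of `P` sharing an arc be glued along it. A path all of whose
triples are rules of `P` overlaps, triple by triple, paths of `P` in two consecutive nodes, so
gluing shows by induction that it is an infix of a path of `P`. Gluing once more with a path of
`P` starting with its first arc and with one ending with its last arc cuts off the extra prefix
and suffix; hence `P↓↑ ⊆ P`, and edge simplicity is inherited from `P`.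
-/

namespace ArcClosed

variable {V : Type*} {P : Set (List V)}

lemma exists_append_append_mem_of_forall_rules (hclosed : ArcClosed P) :
    ∀ l : List V, 3 ≤ l.length →
      (∀ (α β : List V) (a b c : V), l = α ++ [a, b, c] ++ β → (a, b, c) ∈ Rules P) →
      ∃ α β, α ++ l ++ β ∈ P
  | a :: b :: c :: [], _, hrules => hrules [] [] a b c rfl
  | a :: b :: c :: d :: rest, _, hrules => by
    obtain ⟨α, β, htail⟩ := exists_append_append_mem_of_forall_rules hclosed
      (b :: c :: d :: rest) (by simp) fun α β a' b' c' h => hrules (a :: α) β a' b' c' (by simp [h])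
    obtain ⟨α', β', hhead⟩ := hrules [] (d :: rest) a b c rfl
    refine ⟨α', β, ?_⟩
    simpa using hclosed (α' ++ [a]) α β' (d :: rest ++ β) b c (by simpa using hhead)
      (by simpa using htail)

lemma cons_cons_append_mem (hclosed : ArcClosed P) {x y : V} {α r s β : List V}
    (hstart : x :: y :: r ∈ P) (hq : α ++ x :: y :: s ++ β ∈ P) : x :: y :: s ++ β ∈ P := by
  simpa using hclosed [] α r (s ++ β) x y (by simpa using hstart) (by simpa using hq)

lemma append_pair_mem (hclosed : ArcClosed P) {x y : V} {r s β : List V}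
    (hend : r ++ [x, y] ∈ P) (hq : s ++ [x, y] ++ β ∈ P) : s ++ [x, y] ∈ P := by
  simpa using hclosed s r β [] x y hq (by simpa using hend)

theorem closure_subset (hclosed : ArcClosed P) : Closure P ⊆ P := by
  rintro q ⟨hlen, hrules, ⟨x, y, ⟨s, rfl⟩, _, hstart, r, rfl⟩, ⟨x', y', ⟨s', hq⟩, _, hend, r', rfl⟩⟩
  obtain ⟨α, β, hinfix⟩ := hclosed.exists_append_append_mem_of_forall_rules _ hlen hrules
  have hprefix := hclosed.cons_cons_append_mem hstart hinfix
  rw [hq] at hprefix ⊢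
  exact hclosed.append_pair_mem hend hprefix

end ArcClosed

theorem stmt5 {V : Type*} (P : Set (List V))
    (hsimple : ∀ p ∈ P, EdgeSimple p) (hclosed : ArcClosed P) :
    ∀ q ∈ Closure P, EdgeSimple q :=
  fun q hq => hsimple q (hclosed.closure_subset hq)
end

section
/- The arc closure operator is idempotent on sets of paths of length ≥ 2: (P↓↑)↓↑ = P↓↑. -/
/-! A path of `P↓↑` is its own witness for every condition defining `(P↓↑)↓↑`, and conversely
every rule and every first or last arc of a path of `P↓↑` is already one of `P`. -/

section Closure

variable {V : Type*} {P Q : Set (List V)}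

theorem mem_closure_of_mem {l : List V} (hl : l ∈ P) (h3 : 3 ≤ l.length) : l ∈ Closure P := by
  obtain ⟨x, y, r, rfl⟩ : ∃ x y r, l = x :: y :: r := by
    match l, h3 with
    | x :: y :: r, _ => exact ⟨x, y, r, rfl⟩
  obtain ⟨s, u, v, hs⟩ : ∃ s u v, x :: y :: r = s ++ [u, v] := by
    rcases List.eq_nil_or_concat (x :: y :: r) with h | ⟨L, v, hL⟩
    · simp at h
    rcases List.eq_nil_or_concat L with rfl | ⟨s, u, rfl⟩
    · simp [hL] at h3
    exact ⟨s, u, v, by simp [hL]⟩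
  refine ⟨h3, fun α β a b c he => ⟨α, β, he ▸ hl⟩, ⟨x, y, ⟨r, rfl⟩, _, hl, r, rfl⟩,
    ⟨u, v, ⟨s, hs⟩, _, hl, s, hs⟩⟩

theorem closure_subset_closure_closure : Closure P ⊆ Closure (Closure P) :=
  fun _ hl => mem_closure_of_mem hl hl.1

theorem closure_subset_closure_of (hR : Rules Q ⊆ Rules P)
    (hF : ∀ x y r, x :: y :: r ∈ Q → ∃ r', x :: y :: r' ∈ P)
    (hL : ∀ x y r, r ++ [x, y] ∈ Q → ∃ r', r' ++ [x, y] ∈ P) :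
    Closure Q ⊆ Closure P := by
  rintro l ⟨h3, hrules, ⟨x, y, hl, p, hp, r, rfl⟩, ⟨u, v, hl', q, hq, s, rfl⟩⟩
  obtain ⟨r', hr'⟩ := hF x y r hp
  obtain ⟨s', hs'⟩ := hL u v s hq
  exact ⟨h3, fun α β a b c he => hR (hrules α β a b c he), ⟨x, y, hl, _, hr', r', rfl⟩,
    ⟨u, v, hl', _, hs', s', rfl⟩⟩

theorem rules_closure_subset : Rules (Closure P) ⊆ Rules P :=
  fun _ ⟨α, β, hl⟩ => hl.2.1 α β _ _ _ rfl

theorem exists_of_cons_cons_mem_closure {x y : V} {r : List V} (hl : x :: y :: r ∈ Closure P) :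
    ∃ r', x :: y :: r' ∈ P := by
  obtain ⟨x', y', ⟨r₂, he⟩, p, hp, r', rfl⟩ := hl.2.2.1
  obtain ⟨rfl, rfl, -⟩ := List.cons_eq_cons.1 he |>.imp_right List.cons_eq_cons.1
  exact ⟨r', hp⟩

theorem exists_of_append_pair_mem_closure {x y : V} {r : List V}
    (hl : r ++ [x, y] ∈ Closure P) : ∃ r', r' ++ [x, y] ∈ P := by
  obtain ⟨x', y', ⟨r₂, he⟩, p, hp, r', rfl⟩ := hl.2.2.2
  obtain ⟨rfl, rfl, -⟩ := List.cons.inj (List.append_inj' he rfl).2 |>.imp_right List.cons.inj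
  exact ⟨r', hp⟩

theorem closure_closure_subset : Closure (Closure P) ⊆ Closure P :=
  closure_subset_closure_of rules_closure_subset (fun _ _ _ => exists_of_cons_cons_mem_closure)
    (fun _ _ _ => exists_of_append_pair_mem_closure)

end Closure

theorem stmt10_general {V : Type*} (P : Set (List V)) :
    Closure (Closure P) = Closure P :=
  closure_closure_subset.antisymm closure_subset_closure_closure

theorem stmt10 {V : Type*} (P : Set (List V)) (hlen : ∀ p ∈ P, 3 ≤ p.length) :
    Closure (Closure P) = Closure P :=
  stmt10_general P
end

section
/- Let P = {α, β} where α = [h₀,s₁,s₂,s₃,s₄,s₅,s₆,h₁] and β = [h₀,s₁,s₄,s₅,s₂,s₃,s₆,h₁] over distinct nodes h₀,h₁,s₁,…,s₆. Then the arc closure P↓↑ contains the path γ = [h₀,s₁,s₂,s₃,s₄,s₅,s₂,s₃,s₄,s₅,s₆,h₁], which is not edge simple; in particular P is not arc closed. -/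
/-!
The path γ runs twice through the loop s₂ s₃ s₄ s₅. Each of its consecutive triples already
occurs in α or in β (the triples (s₄, s₅, s₂) and (s₅, s₂, s₃) that close the loop come from β),
so γ ∈ P↓↑ although the arc (s₂, s₃) repeats. Exchanging at the arc (s₂, s₃) the prefix of α with
the suffix of β yields a path with 6 nodes, while both paths of P have 8, so P is not arc closed.
-/

section Paths

variable {V : Type*}

def consecutiveTriples : List V → List (V × V × V)
  | a :: b :: c :: l => (a, b, c) :: consecutiveTriples (b :: c :: l)
  | _ => []

theorem mem_consecutiveTriples_iff {l : List V} {a b c : V} :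
    (a, b, c) ∈ consecutiveTriples l ↔ ∃ α β, l = α ++ [a, b, c] ++ β := by
  induction l using consecutiveTriples.induct with
  | case1 x y z l ih =>
    simp only [consecutiveTriples, List.mem_cons, Prod.mk.injEq, ih]
    constructor
    · rintro (⟨rfl, rfl, rfl⟩ | ⟨α, β, h⟩)
      · exact ⟨[], l, rfl⟩
      · exact ⟨x :: α, β, by simp [h]⟩
    · rintro ⟨_ | ⟨x', α⟩, β, h⟩
      · simp_all
      · simp only [List.cons_append, List.cons.injEq] at h
        exact Or.inr ⟨α, β, by simp [h.2]⟩
  | case2 l hl =>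
    simp only [consecutiveTriples, List.not_mem_nil, false_iff]
    rintro ⟨α, β, rfl⟩
    rcases α with _ | ⟨x, _ | ⟨y, _ | ⟨z, α⟩⟩⟩ <;> exact hl _ _ _ _ rfl

theorem mem_rules_iff {P : Set (List V)} {a b c : V} :
    (a, b, c) ∈ Rules P ↔ ∃ p ∈ P, (a, b, c) ∈ consecutiveTriples p := by
  simp only [Rules, Set.mem_ofPred_eq, mem_consecutiveTriples_iff]
  constructor
  · rintro ⟨α, β, h⟩
    exact ⟨_, h, α, β, rfl⟩
  · rintro ⟨p, hp, α, β, rfl⟩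
    exact ⟨α, β, hp⟩

theorem triple_mem_rules_of_subset_flatMap {P : Set (List V)} {l : List V} {ps : List (List V)}
    (hps : ∀ p ∈ ps, p ∈ P) (hsub : consecutiveTriples l ⊆ ps.flatMap consecutiveTriples)
    (α β : List V) (a b c : V) (hl : l = α ++ [a, b, c] ++ β) : (a, b, c) ∈ Rules P := by
  obtain ⟨p, hp, ht⟩ := List.mem_flatMap.1 (hsub (mem_consecutiveTriples_iff.2 ⟨α, β, hl⟩))
  exact mem_rules_iff.2 ⟨p, hps p hp, ht⟩

theorem not_arcClosed_of_length_ne {P : Set (List V)} {n : ℕ} (hP : ∀ p ∈ P, p.length = n)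
    {α α' β β' : List V} {x y : V} (hp : α ++ [x, y] ++ β ∈ P) (hp' : α' ++ [x, y] ++ β' ∈ P)
    (hβ : β.length ≠ β'.length) : ¬ ArcClosed P := by
  intro hP'
  have h₁ := hP _ hp
  have h₂ := hP _ (hP' α α' β β' x y hp hp')
  simp only [List.length_append] at h₁ h₂
  omega

end Paths

theorem stmt13_general {V : Type*} (h0 h1 s1 s2 s3 s4 s5 s6 : V) :
    let P : Set (List V) :=
      {[h0, s1, s2, s3, s4, s5, s6, h1], [h0, s1, s4, s5, s2, s3, s6, h1]}
    let γ : List V := [h0, s1, s2, s3, s4, s5, s2, s3, s4, s5, s6, h1]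
    γ ∈ Closure P ∧ ¬ EdgeSimple γ ∧ ¬ ArcClosed P := by
  intro P γ
  have hα : [h0, s1, s2, s3, s4, s5, s6, h1] ∈ P := Or.inl rfl
  have hβ : [h0, s1, s4, s5, s2, s3, s6, h1] ∈ P := Or.inr rfl
  have hlength : ∀ p ∈ P, p.length = 8 := by rintro p (rfl | rfl) <;> rfl
  have htriples : consecutiveTriples γ ⊆
      [[h0, s1, s2, s3, s4, s5, s6, h1], [h0, s1, s4, s5, s2, s3, s6, h1]].flatMap
        consecutiveTriples := by
    intro t
    simp only [consecutiveTriples, List.mem_cons, List.not_mem_nil, or_false, List.flatMap_cons,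
      List.flatMap_nil, List.append_nil, List.cons_append, List.nil_append, γ]
    rintro (rfl | rfl | rfl | rfl | rfl | rfl | rfl | rfl | rfl | rfl) <;> simp
  refine ⟨⟨by simp [γ], triple_mem_rules_of_subset_flatMap (by simp [hα, hβ]) htriples, ?_, ?_⟩,
    by simp [γ, EdgeSimple], ?_⟩
  · exact ⟨h0, s1, ⟨_, rfl⟩, _, hα, _, rfl⟩
  · exact ⟨s6, h1, ⟨[h0, s1, s2, s3, s4, s5, s2, s3, s4, s5], rfl⟩, _, hα,
      [h0, s1, s2, s3, s4, s5], rfl⟩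
  · exact not_arcClosed_of_length_ne hlength (α := [h0, s1]) (β := [s4, s5, s6, h1])
      (α' := [h0, s1, s4, s5]) (β' := [s6, h1]) hα hβ (by simp)

theorem stmt13 {V : Type*} (h0 h1 s1 s2 s3 s4 s5 s6 : V)
    (hdist : List.Nodup [h0, h1, s1, s2, s3, s4, s5, s6]) :
    let P : Set (List V) :=
      {[h0, s1, s2, s3, s4, s5, s6, h1], [h0, s1, s4, s5, s2, s3, s6, h1]}
    let γ : List V := [h0, s1, s2, s3, s4, s5, s2, s3, s4, s5, s6, h1]
    γ ∈ Closure P ∧ ¬ EdgeSimple γ ∧ ¬ ArcClosed P :=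
  stmt13_general h0 h1 s1 s2 s3 s4 s5 s6
end

section
/- With P = {[h₀,s₁,s₂,s₃,s₄,s₅,s₆,h₁], [h₀,s₁,s₄,s₅,s₂,s₃,s₆,h₁]} over 8 distinct nodes, the arc closure P↓↑ is infinite: for every natural number k it contains a path of length greater than k (obtained by repeating the cycle s₂·s₃·s₄·s₅). -/
namespace List

variable {α : Type*}

theorem IsInfix.of_append_overlap {w m : List α} (hw : w.length ≤ m.length + 1) :
    ∀ {L B : List α}, w <:+: L ++ m ++ B → w <:+: L ++ m ∨ w <:+: m ++ B
  | [], _, h => .inr h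
  | a :: L, B, h => by
    rcases infix_cons_iff.mp h with hpre | hinf
    · refine .inl (prefix_of_prefix_length_le hpre ?_ ?_).isInfix
      · simp
      · simp only [length_cons, length_append]; omega
    · exact (IsInfix.of_append_overlap hw hinf).imp
        (fun h => h.trans (infix_cons (infix_refl _))) id

theorem infinite_of_forall_exists_length_gt {S : Set (List α)}
    (h : ∀ k : ℕ, ∃ p ∈ S, k < p.length) : S.Infinite :=
  Set.Infinite.of_image length <| Set.infinite_of_forall_exists_gt fun k => by
    obtain ⟨p, hp, hk⟩ := h k
    exact ⟨p.length, Set.mem_image_of_mem _ hp, hk⟩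

end List

section

variable {V : Type*} {P : Set (List V)}

theorem Rules.mem_iff {a b c : V} : (a, b, c) ∈ Rules P ↔ ∃ p ∈ P, [a, b, c] <:+: p := by
  simp [Rules, List.IsInfix]

theorem Closure.mem_iff {l : List V} :
    l ∈ Closure P ↔ 3 ≤ l.length ∧ (∀ a b c : V, [a, b, c] <:+: l → (a, b, c) ∈ Rules P) ∧
      (∃ x y : V, [x, y] <+: l ∧ ∃ p ∈ P, [x, y] <+: p) ∧
      (∃ x y : V, [x, y] <:+ l ∧ ∃ p ∈ P, [x, y] <:+ p) := by
  simp only [Closure, Set.mem_ofPred_eq, List.IsInfix, List.IsPrefix, List.IsSuffix,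
    eq_comm (b := l)]
  refine and_congr_right' (and_congr ⟨fun h a b c ⟨s, t, e⟩ => h s t a b c e,
    fun h s t a b c e => h a b c ⟨s, t, e⟩⟩ (and_congr ?_ ?_)) <;>
    simp only [List.cons_append, List.nil_append, eq_comm (a := _ ++ [_, _]),
      eq_comm (a := _ :: _)]

theorem Closure.append_mem_of_isPrefix_of_isSuffix {w₁ w₂ L B : List V} {x y : V} (hL : L ≠ [])
    (hw₁ : w₁ ∈ Closure P) (hw₂ : w₂ ∈ Closure P)
    (hpre : L ++ [x, y] <+: w₁) (hsuf : [x, y] ++ B <:+ w₂) :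
    L ++ [x, y] ++ B ∈ Closure P := by
  rw [Closure.mem_iff] at hw₁ hw₂ ⊢
  obtain ⟨-, hrules₁, ⟨x₁, y₁, hfirst, hfirstP⟩, -⟩ := hw₁
  obtain ⟨-, hrules₂, -, ⟨x₂, y₂, hlast, hlastP⟩⟩ := hw₂
  have hlen : 1 ≤ L.length := List.length_pos_iff.mpr hL
  refine ⟨by simp; omega, fun a b c h => ?_, ⟨x₁, y₁, ?_, hfirstP⟩, ⟨x₂, y₂, ?_, hlastP⟩⟩
  · rcases h.of_append_overlap (by simp) with h | h
    · exact hrules₁ a b c (h.trans hpre.isInfix)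
    · exact hrules₂ a b c (h.trans hsuf.isInfix)
  · refine (List.prefix_of_prefix_length_le hfirst hpre (by simp)).trans ?_
    exact List.prefix_append _ _
  · refine (List.suffix_of_suffix_length_le hlast hsuf (by simp)).trans ?_
    simpa only [List.append_assoc] using List.suffix_append L ([x, y] ++ B)

theorem Closure.exists_length_gt_of_repeated_arc {u v t : List V} {x y : V}
    (hw : u ++ [x, y] ++ v ++ [x, y] ++ t ∈ Closure P) (k : ℕ) :
    ∃ p ∈ Closure P, k < p.length := by
  suffices ∀ k, ∃ u', u' ++ [x, y] ++ v ++ [x, y] ++ t ∈ Closure P ∧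
      k < (u' ++ [x, y] ++ v ++ [x, y] ++ t).length by
    obtain ⟨u', hu'⟩ := this k
    exact ⟨_, hu'⟩
  intro k
  induction k with
  | zero => exact ⟨u, hw, by simp⟩
  | succ k ih =>
    obtain ⟨u', hmem, hlen⟩ := ih
    refine ⟨u' ++ [x, y] ++ v, ?_, by simp at hlen ⊢; omega⟩
    have := Closure.append_mem_of_isPrefix_of_isSuffix (x := x) (y := y)
      (L := u' ++ [x, y] ++ v) (B := v ++ [x, y] ++ t) (by simp) hmem hmem ⟨t, by simp⟩ ⟨u', by simp⟩
    simpa only [List.append_assoc] using this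

theorem pumpable_path_mem_closure (h0 h1 s1 s2 s3 s4 s5 s6 : V) :
    [h0, s1] ++ [s2, s3] ++ [s4, s5] ++ [s2, s3] ++ [s6, h1] ∈
      Closure {[h0, s1, s2, s3, s4, s5, s6, h1], [h0, s1, s4, s5, s2, s3, s6, h1]} := by
  rw [Closure.mem_iff]
  refine ⟨by simp, ?_, ⟨h0, s1, by simp, _, Or.inl rfl, by simp⟩,
    ⟨s6, h1, ⟨[h0, s1, s2, s3, s4, s5, s2, s3], rfl⟩, _, Or.inl rfl,
      ⟨[h0, s1, s2, s3, s4, s5], rfl⟩⟩⟩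
  intro a b c h
  simp only [List.cons_append, List.nil_append, List.infix_cons_iff, List.cons_prefix_cons,
    List.nil_prefix, and_true, List.prefix_rfl, List.prefix_nil, List.cons_ne_self, and_false,
    reduceCtorEq, List.infix_nil, or_self, or_false] at h
  rw [Rules.mem_iff]
  rcases h with h | h | h | h | h | h | h | h <;> obtain ⟨rfl, rfl, rfl⟩ := h <;>
    simp [List.infix_cons_iff]

end

theorem stmt14_general {V : Type*} (h0 h1 s1 s2 s3 s4 s5 s6 : V) :
    let P : Set (List V) :=
      {[h0, s1, s2, s3, s4, s5, s6, h1], [h0, s1, s4, s5, s2, s3, s6, h1]}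
    (Closure P).Infinite ∧ ∀ k : ℕ, ∃ p ∈ Closure P, k < p.length - 1 := by
  intro P
  have hlong := Closure.exists_length_gt_of_repeated_arc
    (pumpable_path_mem_closure h0 h1 s1 s2 s3 s4 s5 s6)
  refine ⟨List.infinite_of_forall_exists_length_gt hlong, fun k => ?_⟩
  obtain ⟨p, hp, hk⟩ := hlong (k + 1)
  exact ⟨p, hp, by omega⟩

theorem stmt14 {V : Type*} (h0 h1 s1 s2 s3 s4 s5 s6 : V)
    (hdist : List.Nodup [h0, h1, s1, s2, s3, s4, s5, s6]) :
    let P : Set (List V) :=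
      {[h0, s1, s2, s3, s4, s5, s6, h1], [h0, s1, s4, s5, s2, s3, s6, h1]}
    (Closure P).Infinite ∧ ∀ k : ℕ, ∃ p ∈ Closure P, k < p.length - 1 :=
  stmt14_general h0 h1 s1 s2 s3 s4 s5 s6
end
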